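/- arXiv:0801.3689 — 7 statements merged into one kernel-verified Lean document; each statement's English description precedes it below -/
import Mathlib

section
/- If S₀ > 0, S₃ > 0, and D < 0, then the cubic p(x) = −S₀x³ + S₁x² − S₂x + S₃ has exactly one real root, and that root is positive. Hence the network has exactly one steady state in each invariant polyhedron. -/
/-!
Two distinct real roots `x ≠ y` of a cubic with leading coefficient `a ≠ 0` force, by Vieta, a
third root `z` with `P = a (X - x) (X - y) (X - z)`, whence the discriminant equals
`(a² (x - y) (x - z) (y - z))² ≥ 0`. So a negative discriminant allows at most one real root.
For `p` that root exists and is positive: `p 0 = S₃ > 0` while `p x → -∞` as `x → ∞`.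
-/

open Polynomial

namespace Cubic

theorem eval_toPoly {R : Type*} [Semiring R] (P : Cubic R) (x : R) :
    P.toPoly.eval x = P.a * x ^ 3 + P.b * x ^ 2 + P.c * x + P.d := by
  simp only [toPoly, eval_add, eval_C_mul, eval_X_pow, eval_X, eval_C]

theorem isSquare_discr_of_eval_eq_zero {K : Type*} [Field K] (P : Cubic K) (ha : P.a ≠ 0)
    {x y : K} (hxy : x ≠ y) (hx : P.toPoly.eval x = 0) (hy : P.toPoly.eval y = 0) :
    IsSquare P.discr := by
  rw [eval_toPoly] at hx hy
  obtain ⟨z, hb⟩ : ∃ z, P.b = -P.a * (x + y + z) := ⟨-P.b / P.a - x - y, by field_simp; ring⟩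
  have hc : P.c = P.a * (x * y + x * z + y * z) := by
    refine mul_right_cancel₀ (sub_ne_zero.mpr hxy) ?_
    linear_combination hx - hy - (x ^ 2 - y ^ 2) * hb
  have hd : P.d = -P.a * (x * y * z) := by
    linear_combination hx - x * hc - x ^ 2 * hb
  exact ⟨P.a * P.a * (x - y) * (x - z) * (y - z), by rw [discr, hb, hc, hd]; ring⟩

end Cubic

theorem Polynomial.exists_isRoot_gt_of_leadingCoeff_nonpos (P : ℝ[X]) (hdeg : 0 < P.degree)
    (hlc : P.leadingCoeff ≤ 0) {a : ℝ} (ha : 0 < P.eval a) : ∃ x > a, P.IsRoot x :=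
  intermediate_value_Ioi' P.continuousOn (P.tendsto_atBot_of_leadingCoeff_nonpos hdeg hlc) ha

/-- If `S₀ > 0`, `S₃ > 0` and the discriminant
`D = 18S₀S₁S₂S₃ − 4S₁³S₃ + S₁²S₂² − 4S₀S₂³ − 27S₀²S₃²` is negative, then the cubic
`p(x) = −S₀x³ + S₁x² − S₂x + S₃` has exactly one real root, and that root is
positive.  Hence the network has exactly one steady state in each invariant
polyhedron. -/
theorem cubic_unique_root_of_neg_discriminant
    (S₀ S₁ S₂ S₃ D : ℝ) (hS₀ : 0 < S₀) (hS₃ : 0 < S₃)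
    (hD : D = 18 * S₀ * S₁ * S₂ * S₃ - 4 * S₁ ^ 3 * S₃ + S₁ ^ 2 * S₂ ^ 2
      - 4 * S₀ * S₂ ^ 3 - 27 * S₀ ^ 2 * S₃ ^ 2)
    (hDneg : D < 0)
    (p : ℝ → ℝ)
    (hp : ∀ x, p x = -S₀ * x ^ 3 + S₁ * x ^ 2 - S₂ * x + S₃) :
    ∃ x : ℝ, 0 < x ∧ p x = 0 ∧ ∀ y : ℝ, p y = 0 → y = x := by
  set P : Cubic ℝ := ⟨-S₀, S₁, -S₂, S₃⟩
  have hp_eval (x : ℝ) : p x = P.toPoly.eval x := by rw [hp, Cubic.eval_toPoly]; ring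
  have ha : P.a ≠ 0 := neg_ne_zero.mpr hS₀.ne'
  have hdiscr : P.discr = D := by rw [hD, Cubic.discr]; ring
  obtain ⟨x, hx_pos, hx_root⟩ := P.toPoly.exists_isRoot_gt_of_leadingCoeff_nonpos
    (by rw [Cubic.degree_of_a_ne_zero ha]; norm_num)
    (by rw [Cubic.leadingCoeff_of_a_ne_zero ha]; exact neg_nonpos.mpr hS₀.le)
    (a := 0) (by rw [← hp_eval, hp]; simpa using hS₃)
  refine ⟨x, hx_pos, (hp_eval x).trans hx_root, fun y hy => ?_⟩
  by_contra hyx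
  have hsq := P.isSquare_discr_of_eval_eq_zero ha hyx ((hp_eval y).symm.trans hy) hx_root
  linarith [hsq.nonneg]
end

section
/- Suppose S₀ > 0, S₃ > 0, and D ≥ 0. Then all three complex roots of the cubic p(x) = −S₀x³ + S₁x² − S₂x + S₃ (counted with multiplicity) are real; moreover, all three roots are positive if and only if S₁ > 0 and S₂ > 0, and otherwise p has exactly one positive root (of multiplicity one) and two negative roots (counted with multiplicity). -/
/-!
A real cubic has a real root `r`. The discriminant of `P` is `P'(r)²` times the discriminant of
the quadratic quotient `P / (X - r)`, so `D ≥ 0` gives the quotient a real root too: either its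
discriminant is nonnegative, or `P'(r) = 0` and `r` is a double root. With the three real roots
`x, y, z`, Vieta gives `S₁ = S₀(x+y+z)`, `S₂ = S₀(xy+xz+yz)`, `S₃ = S₀xyz`, so `xyz > 0`: either all
three roots are positive, which happens iff `S₁, S₂ > 0`, or exactly two of them are negative.
-/

open Polynomial Filter

theorem Polynomial.exists_isRoot_of_odd_natDegree {P : ℝ[X]} (hP : Odd P.natDegree) :
    ∃ x, P.IsRoot x := by
  have hP0 : P ≠ 0 := by rintro rfl; simp at hP
  wlog hlc : 0 < P.leadingCoeff generalizing P
  · obtain ⟨x, hx⟩ := this (P := -P) (by rwa [natDegree_neg]) (neg_ne_zero.2 hP0)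
      (by
        rw [leadingCoeff_neg, neg_pos]
        exact (not_lt.1 hlc).lt_of_ne (leadingCoeff_ne_zero.2 hP0))
    exact ⟨x, by simpa using hx⟩
  have hdeg : 0 < P.degree := natDegree_pos_iff_degree_pos.1 hP.pos
  have htop : Tendsto P.eval atTop atTop := P.tendsto_atTop_of_leadingCoeff_nonneg hdeg hlc.le
  have hbot : Tendsto P.eval atBot atBot := by
    have hdeg' : 0 < (P.comp (-X)).degree := by
      rw [← natDegree_pos_iff_degree_pos, natDegree_comp]; simpa using hP.pos
    have hlc' : (P.comp (-X)).leadingCoeff ≤ 0 := by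
      rw [leadingCoeff_comp (by simp), leadingCoeff_neg, leadingCoeff_X, hP.neg_one_pow]
      linarith
    simpa [Function.comp_def] using
      (tendsto_atBot_of_leadingCoeff_nonpos _ hdeg' hlc').comp tendsto_neg_atBot_atTop
  exact P.continuous.surjective htop hbot 0

namespace Cubic

variable {R : Type*}

/-- The quadratic factor is the quotient of `P` by `X - r`, and `3ar² + 2br + c = P'(r)`. -/
theorem discr_eq_of_isRoot [CommRing R] {P : Cubic R} {r : R} (hr : P.toPoly.IsRoot r) :
    P.discr = (3 * P.a * r ^ 2 + 2 * P.b * r + P.c) ^ 2 *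
      discrim P.a (P.b + P.a * r) (P.c + P.b * r + P.a * r ^ 2) := by
  have hd : P.d = -(P.a * r ^ 3 + P.b * r ^ 2 + P.c * r) := by
    simp [toPoly] at hr; linear_combination hr
  rw [discr, discrim, hd]; ring

theorem toPoly_eq_of_isRoot [Field R] {P : Cubic R} (ha : P.a ≠ 0) {r s : R}
    (hr : P.toPoly.IsRoot r)
    (hs : P.a * (s * s) + (P.b + P.a * r) * s + (P.c + P.b * r + P.a * r ^ 2) = 0) :
    P.toPoly = C P.a * (X - C r) * (X - C s) * (X - C (-(P.b / P.a) - r - s)) := by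
  have hd : P.d = -(P.a * r ^ 3 + P.b * r ^ 2 + P.c * r) := by
    simp [toPoly] at hr; linear_combination hr
  rw [C_mul_prod_X_sub_C_eq, toPoly_injective]
  ext
  · rfl
  · field_simp; ring
  · field_simp; linear_combination hs
  · have hab : P.a * (P.b / P.a) = P.b := mul_div_cancel₀ _ ha
    linear_combination hd - r * hs - r * s * hab

theorem exists_roots_eq_three_of_discr_nonneg {P : Cubic ℝ} (ha : P.a ≠ 0) (hd : 0 ≤ P.discr) :
    ∃ x y z, P.roots = {x, y, z} := by
  obtain ⟨r, hr⟩ := P.toPoly.exists_isRoot_of_odd_natDegree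
    (by rw [natDegree_of_a_ne_zero ha]; decide)
  obtain ⟨s, hs⟩ :
      ∃ s, P.a * (s * s) + (P.b + P.a * r) * s + (P.c + P.b * r + P.a * r ^ 2) = 0 := by
    rcases le_or_gt 0 (discrim P.a (P.b + P.a * r) (P.c + P.b * r + P.a * r ^ 2)) with hq | hq
    · exact exists_quadratic_eq_zero ha ⟨_, (Real.mul_self_sqrt hq).symm⟩
    -- otherwise `P'(r) = 0`, so `r` is a double root
    · have hr' : 3 * P.a * r ^ 2 + 2 * P.b * r + P.c = 0 := by
        rw [discr_eq_of_isRoot hr] at hd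
        exact pow_eq_zero_iff two_ne_zero |>.1
          (le_antisymm (nonpos_of_mul_nonneg_left hd hq) (sq_nonneg _))
      exact ⟨r, by linear_combination hr'⟩
  refine ⟨r, s, -(P.b / P.a) - r - s, ?_⟩
  rw [roots, toPoly_eq_of_isRoot ha hr hs, mul_assoc, mul_assoc, roots_C_mul _ ha,
    ← roots_multiset_prod_X_sub_C {r, s, -(P.b / P.a) - r - s}]
  simp

end Cubic

section SignsOfThree

variable {R : Type*} [CommRing R] [LinearOrder R] [IsStrictOrderedRing R] {x y z : R}

theorem pos_and_pos_and_pos_iff_of_mul_pos (h : 0 < x * y * z) :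
    (0 < x ∧ 0 < y ∧ 0 < z) ↔ 0 < x + y + z ∧ 0 < x * y + x * z + y * z := by
  refine ⟨fun ⟨hx, hy, hz⟩ => ⟨by positivity, by positivity⟩, fun ⟨h₁, h₂⟩ => ?_⟩
  -- `(w - x) (w - y) (w - z) = w³ - e₁ w² + e₂ w - e₃` is negative for `w ≤ 0`
  have key : ∀ w, (w - x) * (w - y) * (w - z) = 0 → 0 < w := by
    intro w hw
    by_contra! hw0
    nlinarith [mul_nonpos_of_nonpos_of_nonneg hw0 (sq_nonneg w), mul_nonneg h₁.le (sq_nonneg w),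
      mul_nonpos_of_nonneg_of_nonpos h₂.le hw0]
  exact ⟨key x (by ring), key y (by ring), key z (by ring)⟩

theorem exactly_one_pos_of_mul_pos (h : 0 < x * y * z) (hneg : ¬(0 < x ∧ 0 < y ∧ 0 < z)) :
    (0 < x ∧ y < 0 ∧ z < 0) ∨ (x < 0 ∧ 0 < y ∧ z < 0) ∨ (x < 0 ∧ y < 0 ∧ 0 < z) := by
  rw [mul_pos_iff, mul_pos_iff, mul_neg_iff] at h
  tauto

theorem card_filter_pos_eq_one_and_card_filter_neg_eq_two (h : 0 < x * y * z)
    (hneg : ¬(0 < x ∧ 0 < y ∧ 0 < z)) :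
    Multiset.card (({x, y, z} : Multiset R).filter (0 < ·)) = 1 ∧
      Multiset.card (({x, y, z} : Multiset R).filter (· < 0)) = 2 := by
  rcases exactly_one_pos_of_mul_pos h hneg with ⟨hx, hy, hz⟩ | ⟨hx, hy, hz⟩ | ⟨hx, hy, hz⟩ <;>
    simp [Multiset.filter_singleton, hx, hy, hz, hx.not_gt, hy.not_gt, hz.not_gt]

end SignsOfThree

/-- Suppose `S₀ > 0`, `S₃ > 0` and the discriminant `D ≥ 0`.  Then all
three complex roots of `p(x) = −S₀x³ + S₁x² − S₂x + S₃` (with multiplicity) are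
real (i.e. `p` has three real roots counted with multiplicity); all three roots
are positive iff `S₁ > 0` and `S₂ > 0`; and otherwise `p` has exactly one positive
root (of multiplicity one) and two negative roots (with multiplicity). -/
theorem cubic_roots_real_and_sign_classification
    (S₀ S₁ S₂ S₃ D : ℝ) (hS₀ : 0 < S₀) (hS₃ : 0 < S₃)
    (hD : D = 18 * S₀ * S₁ * S₂ * S₃ - 4 * S₁ ^ 3 * S₃ + S₁ ^ 2 * S₂ ^ 2
      - 4 * S₀ * S₂ ^ 3 - 27 * S₀ ^ 2 * S₃ ^ 2)
    (hDnonneg : 0 ≤ D)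
    (P : ℝ[X])
    (hP : P = C (-S₀) * X ^ 3 + C S₁ * X ^ 2 + C (-S₂) * X + C S₃) :
    Multiset.card P.roots = 3 ∧
    ((∀ x ∈ P.roots, 0 < x) ↔ (0 < S₁ ∧ 0 < S₂)) ∧
    (¬(0 < S₁ ∧ 0 < S₂) →
      Multiset.card (P.roots.filter (fun x => 0 < x)) = 1 ∧
      Multiset.card (P.roots.filter (fun x => x < 0)) = 2) := by
  set Q : Cubic ℝ := ⟨-S₀, S₁, -S₂, S₃⟩
  have ha : Q.a ≠ 0 := neg_ne_zero.2 hS₀.ne'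
  have hdiscr : Q.discr = D := by rw [hD, Cubic.discr]; ring
  obtain ⟨x, y, z, h3⟩ := Q.exists_roots_eq_three_of_discr_nonneg ha (hdiscr ▸ hDnonneg)
  have hroots : P.roots = {x, y, z} := hP ▸ h3
  obtain ⟨-, e₁, e₂, e₃⟩ := Cubic.mk.inj (Cubic.eq_sum_three_roots (φ := RingHom.id ℝ) ha h3)
  simp only [RingHom.id_apply] at e₁ e₂ e₃
  replace e₁ : S₁ = S₀ * (x + y + z) := by linear_combination e₁
  replace e₂ : S₂ = S₀ * (x * y + x * z + y * z) := by linear_combination -e₂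
  replace e₃ : S₃ = S₀ * (x * y * z) := by linear_combination e₃
  have hxyz : 0 < x * y * z := pos_of_mul_pos_right (e₃ ▸ hS₃) hS₀.le
  have hsigns : (0 < x ∧ 0 < y ∧ 0 < z) ↔ 0 < S₁ ∧ 0 < S₂ := by
    rw [e₁, e₂, mul_pos_iff_of_pos_left hS₀, mul_pos_iff_of_pos_left hS₀]
    exact pos_and_pos_and_pos_iff_of_mul_pos hxyz
  rw [hroots]
  refine ⟨rfl, by simpa using hsigns, fun h => ?_⟩
  exact card_filter_pos_eq_one_and_card_filter_neg_eq_two hxyz (hsigns.not.2 h)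
end

section
/- If D > 0 and S₀ > 0, S₁ > 0, S₂ > 0, S₃ > 0, then the cubic p(x) = −S₀x³ + S₁x² − S₂x + S₃ has exactly three real roots, they are pairwise distinct, and all three are positive. Hence the network has exactly three steady states in each invariant polyhedron. -/
/-!
With `Δ₀ = b² - 3ac`, `Δ₁ = 2b³ - 9abc + 27a²d` and `y = 3ax + b`, a cubic satisfies
`27a² (ax³ + bx² + cx + d) = y³ - 3Δ₀y + Δ₁`, and `4Δ₀³ - Δ₁² = 27a² disc`. So when `disc > 0`,
`Δ₀ > 0` and the substitution `y = √Δ₀ z` turns the cubic into a multiple of `z³ - 3z + q` with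
`|q| < 2`. As `z³ - 3z` takes the values `-2, 2, -2, 2` at `z = -2, -1, 1, 2`, the intermediate value
theorem gives three distinct real roots, and a cubic has no others. For `p`, all terms are
nonnegative at `x ≤ 0` and `S₃ > 0`, so these roots are positive.
-/

theorem Cubic.toFinset_roots_eq_of_mem {R : Type*} [CommRing R] [IsDomain R] [DecidableEq R]
    {P : Cubic R} {x y z : R} (hxy : x ≠ y) (hxz : x ≠ z) (hyz : y ≠ z)
    (hx : x ∈ P.roots) (hy : y ∈ P.roots) (hz : z ∈ P.roots) :
    P.roots.toFinset = {x, y, z} := by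
  symm
  refine Finset.eq_of_subset_of_card_le ?_ ?_
  · simp [Finset.insert_subset_iff, hx, hy, hz]
  · rw [Finset.card_eq_three.mpr ⟨x, y, z, hxy, hxz, hyz, rfl⟩]
    exact Cubic.card_roots_le

theorem exists_three_roots_cube_sub_three_mul_add {q : ℝ} (hq : |q| < 2) :
    ∃ z₁ z₂ z₃ : ℝ, z₁ < z₂ ∧ z₂ < z₃ ∧
      z₁ ^ 3 - 3 * z₁ + q = 0 ∧ z₂ ^ 3 - 3 * z₂ + q = 0 ∧ z₃ ^ 3 - 3 * z₃ + q = 0 := by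
  obtain ⟨hq₁, hq₂⟩ := abs_lt.mp hq
  have hf : Continuous fun z : ℝ => z ^ 3 - 3 * z + q := by fun_prop
  obtain ⟨z₁, ⟨-, h₁⟩, hz₁⟩ := intermediate_value_Ioo (by norm_num : (-2 : ℝ) ≤ -1)
    hf.continuousOn (show (0 : ℝ) ∈ Set.Ioo _ _ by constructor <;> norm_num <;> linarith)
  obtain ⟨z₂, ⟨h₂, h₂'⟩, hz₂⟩ := intermediate_value_Ioo' (by norm_num : (-1 : ℝ) ≤ 1)
    hf.continuousOn (show (0 : ℝ) ∈ Set.Ioo _ _ by constructor <;> norm_num <;> linarith)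
  obtain ⟨z₃, ⟨h₃, -⟩, hz₃⟩ := intermediate_value_Ioo (by norm_num : (1 : ℝ) ≤ 2)
    hf.continuousOn (show (0 : ℝ) ∈ Set.Ioo _ _ by constructor <;> norm_num <;> linarith)
  exact ⟨z₁, z₂, z₃, h₁.trans h₂, h₂'.trans h₃, hz₁, hz₂, hz₃⟩

theorem Cubic.exists_three_roots_of_discr_pos {P : Cubic ℝ} (ha : P.a ≠ 0) (hdiscr : 0 < P.discr) :
    ∃ x y z : ℝ, x ≠ y ∧ x ≠ z ∧ y ≠ z ∧ x ∈ P.roots ∧ y ∈ P.roots ∧ z ∈ P.roots := by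
  set Δ₀ := P.b ^ 2 - 3 * P.a * P.c
  set Δ₁ := 2 * P.b ^ 3 - 9 * P.a * P.b * P.c + 27 * P.a ^ 2 * P.d
  have hΔ : Δ₁ ^ 2 < 4 * Δ₀ ^ 3 := by
    have : 4 * Δ₀ ^ 3 - Δ₁ ^ 2 = 27 * P.a ^ 2 * P.discr := by simp only [Δ₀, Δ₁, Cubic.discr]; ring
    have : 0 < 27 * P.a ^ 2 * P.discr := by positivity
    linarith
  have hΔ₀ : 0 < Δ₀ := by
    have : 0 < Δ₀ ^ 3 := by nlinarith [sq_nonneg Δ₁]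
    exact (Odd.pow_pos_iff (by decide)).mp this
  set s := √Δ₀
  have hs : 0 < s := Real.sqrt_pos.mpr hΔ₀
  have hs₂ : s ^ 2 = Δ₀ := Real.sq_sqrt hΔ₀.le
  have hq : |Δ₁ / s ^ 3| < 2 := by
    rw [abs_div, abs_of_pos (pow_pos hs 3), div_lt_iff₀ (pow_pos hs 3)]
    refine abs_lt_of_sq_lt_sq ?_ (by positivity)
    calc Δ₁ ^ 2 < 4 * Δ₀ ^ 3 := hΔ
      _ = (2 * s ^ 3) ^ 2 := by rw [← hs₂]; ring
  obtain ⟨z₁, z₂, z₃, h₁₂, h₂₃, hz₁, hz₂, hz₃⟩ := exists_three_roots_cube_sub_three_mul_add hq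
  set x : ℝ → ℝ := fun z => (s * z - P.b) / (3 * P.a)
  have hx_inj : Function.Injective x := fun z w h => by
    simpa [x, div_left_inj' (mul_ne_zero three_ne_zero ha), hs.ne'] using h
  have hx_root : ∀ z, z ^ 3 - 3 * z + Δ₁ / s ^ 3 = 0 → x z ∈ P.roots := by
    intro z hz
    rw [Cubic.mem_roots_iff (Cubic.ne_zero_of_a_ne_zero ha)]
    have hy : 3 * P.a * x z + P.b = s * z := by
      simp only [x]
      field_simp
      ring
    have hP : 27 * P.a ^ 2 * (P.a * x z ^ 3 + P.b * x z ^ 2 + P.c * x z + P.d) =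
        s ^ 3 * (z ^ 3 - 3 * z + Δ₁ / s ^ 3) :=
      calc _ = (3 * P.a * x z + P.b) ^ 3 - 3 * Δ₀ * (3 * P.a * x z + P.b) + Δ₁ := by ring
        _ = (s * z) ^ 3 - 3 * s ^ 2 * (s * z) + Δ₁ := by rw [hy, hs₂]
        _ = _ := by field_simp
    rw [hz, mul_zero] at hP
    exact (mul_eq_zero.mp hP).resolve_left (by positivity)
  exact ⟨x z₁, x z₂, x z₃, hx_inj.ne h₁₂.ne, hx_inj.ne (h₁₂.trans h₂₃).ne, hx_inj.ne h₂₃.ne,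
    hx_root _ hz₁, hx_root _ hz₂, hx_root _ hz₃⟩

/-- If the discriminant `D > 0` and `S₀, S₁, S₂, S₃ > 0`, then the
cubic `p(x) = −S₀x³ + S₁x² − S₂x + S₃` has exactly three real roots, pairwise
distinct and all positive.  Hence the network has exactly three steady states in
each invariant polyhedron. -/
theorem cubic_three_distinct_positive_roots
    (S₀ S₁ S₂ S₃ D : ℝ)
    (hS₀ : 0 < S₀) (hS₁ : 0 < S₁) (hS₂ : 0 < S₂) (hS₃ : 0 < S₃)
    (hD : D = 18 * S₀ * S₁ * S₂ * S₃ - 4 * S₁ ^ 3 * S₃ + S₁ ^ 2 * S₂ ^ 2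
      - 4 * S₀ * S₂ ^ 3 - 27 * S₀ ^ 2 * S₃ ^ 2)
    (hDpos : 0 < D)
    (p : ℝ → ℝ)
    (hp : ∀ x, p x = -S₀ * x ^ 3 + S₁ * x ^ 2 - S₂ * x + S₃) :
    ∃ x₁ x₂ x₃ : ℝ, x₁ ≠ x₂ ∧ x₁ ≠ x₃ ∧ x₂ ≠ x₃ ∧
      0 < x₁ ∧ 0 < x₂ ∧ 0 < x₃ ∧
      (∀ x : ℝ, p x = 0 ↔ (x = x₁ ∨ x = x₂ ∨ x = x₃)) := by
  set P : Cubic ℝ := ⟨-S₀, S₁, -S₂, S₃⟩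
  have ha : P.a ≠ 0 := neg_ne_zero.mpr hS₀.ne'
  have hdiscr : P.discr = D := by rw [hD]; simp only [Cubic.discr, P]; ring
  have hroots : ∀ x, p x = 0 ↔ x ∈ P.roots := fun x => by
    rw [hp, Cubic.mem_roots_iff (Cubic.ne_zero_of_a_ne_zero ha)]
    simp only [P]
    ring_nf
  have hpos : ∀ x ∈ P.roots, 0 < x := fun x hx => by
    by_contra! hx₀
    have := (hroots x).mpr hx
    rw [hp] at this
    nlinarith [mul_nonneg (mul_nonneg hS₀.le (neg_nonneg.mpr hx₀)) (sq_nonneg x),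
      mul_nonneg hS₁.le (sq_nonneg x), mul_nonneg hS₂.le (neg_nonneg.mpr hx₀)]
  obtain ⟨x₁, x₂, x₃, h₁₂, h₁₃, h₂₃, hx₁, hx₂, hx₃⟩ :=
    Cubic.exists_three_roots_of_discr_pos ha (hdiscr ▸ hDpos)
  refine ⟨x₁, x₂, x₃, h₁₂, h₁₃, h₂₃, hpos _ hx₁, hpos _ hx₂, hpos _ hx₃, fun x => ?_⟩
  classical
  rw [hroots, ← Multiset.mem_toFinset, Cubic.toFinset_roots_eq_of_mem h₁₂ h₁₃ h₂₃ hx₁ hx₂ hx₃]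
  simp
end

section
/- If D = 0, S₀ > 0, S₁ > 0, S₂ > 0, S₃ > 0, and the triple root condition 3S₀S₂ = S₁² and 27S₀²S₃ = S₁³ holds, then the cubic p(x) = −S₀x³ + S₁x² − S₂x + S₃ has exactly one real root, namely α = S₁/(3S₀) > 0, which has multiplicity three. Hence the network has exactly one steady state in each invariant polyhedron. -/
theorem cubic_eq_neg_mul_sub_cube_of_triple_root {K : Type*} [Field K] [NeZero (3 : K)]
    {a b c d : K} (ha : a ≠ 0) (hc : 3 * a * c = b ^ 2) (hd : 27 * a ^ 2 * d = b ^ 3) (x : K) :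
    -a * x ^ 3 + b * x ^ 2 - c * x + d = -a * (x - b / (3 * a)) ^ 3 := by
  have h3 : (3 : K) ≠ 0 := NeZero.ne 3
  field_simp
  linear_combination (-9 * a * x) * hc + hd

theorem cubic_triple_root_case_general
    (S₀ S₁ S₂ S₃ : ℝ)
    (hS₀ : 0 < S₀) (hS₁ : 0 < S₁)
    (htriple : 3 * S₀ * S₂ = S₁ ^ 2 ∧ 27 * S₀ ^ 2 * S₃ = S₁ ^ 3)
    (p : ℝ → ℝ)
    (hp : ∀ x, p x = -S₀ * x ^ 3 + S₁ * x ^ 2 - S₂ * x + S₃) :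
    0 < S₁ / (3 * S₀) ∧
    (∀ x : ℝ, p x = -S₀ * (x - S₁ / (3 * S₀)) ^ 3) ∧
    (∀ x : ℝ, p x = 0 ↔ x = S₁ / (3 * S₀)) := by
  have hfactor : ∀ x, p x = -S₀ * (x - S₁ / (3 * S₀)) ^ 3 := fun x =>
    (hp x).trans (cubic_eq_neg_mul_sub_cube_of_triple_root hS₀.ne' htriple.1 htriple.2 x)
  refine ⟨by positivity, hfactor, fun x => ?_⟩
  simp [hfactor, hS₀.ne', sub_eq_zero]

/-- If `D = 0`, `S₀, S₁, S₂, S₃ > 0`, and the triple root condition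
`3S₀S₂ = S₁²`, `27S₀²S₃ = S₁³` holds, then the cubic
`p(x) = −S₀x³ + S₁x² − S₂x + S₃` has exactly one real root, namely
`α = S₁/(3S₀) > 0`, of multiplicity three (i.e. `p(x) = −S₀(x − α)³`).
Hence the network has exactly one steady state in each invariant polyhedron. -/
theorem cubic_triple_root_case
    (S₀ S₁ S₂ S₃ D : ℝ)
    (hS₀ : 0 < S₀) (hS₁ : 0 < S₁) (hS₂ : 0 < S₂) (hS₃ : 0 < S₃)
    (hD : D = 18 * S₀ * S₁ * S₂ * S₃ - 4 * S₁ ^ 3 * S₃ + S₁ ^ 2 * S₂ ^ 2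
      - 4 * S₀ * S₂ ^ 3 - 27 * S₀ ^ 2 * S₃ ^ 2)
    (hDzero : D = 0)
    (htriple : 3 * S₀ * S₂ = S₁ ^ 2 ∧ 27 * S₀ ^ 2 * S₃ = S₁ ^ 3)
    (p : ℝ → ℝ)
    (hp : ∀ x, p x = -S₀ * x ^ 3 + S₁ * x ^ 2 - S₂ * x + S₃) :
    0 < S₁ / (3 * S₀) ∧
    (∀ x : ℝ, p x = -S₀ * (x - S₁ / (3 * S₀)) ^ 3) ∧
    (∀ x : ℝ, p x = 0 ↔ x = S₁ / (3 * S₀)) :=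
  cubic_triple_root_case_general S₀ S₁ S₂ S₃ hS₀ hS₁ htriple p hp
end

section
/- If D = 0, S₀ > 0, S₁ > 0, S₂ > 0, S₃ > 0, and the triple root condition fails (i.e., 3S₀S₂ ≠ S₁² or 27S₀²S₃ ≠ S₁³), then the cubic p(x) = −S₀x³ + S₁x² − S₂x + S₃ has exactly two distinct real roots, both positive: one simple root and one double root. Hence the network has exactly two steady states in each invariant polyhedron. -/
/-!
Vanishing of the discriminant together with `S₁² ≠ 3S₀S₂` (which, given `D = 0`, is equivalent to
the failure of the triple root condition) forces `p(x) = −S₀(x − r)²(x − s)` with `r ≠ s`, where `r`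
and `s` are rational in the coefficients. Since the coefficients of `p` alternate in sign with
`S₃ > 0`, `p` is positive on `(−∞, 0]`, so both roots are positive.
-/

namespace Cubic

variable {K : Type*} [Field K] (P : Cubic K)

theorem triple_root_condition_of_discr_eq_zero (hdiscr : P.discr = 0)
    (h : P.b ^ 2 = 3 * P.a * P.c) : 27 * P.a ^ 2 * P.d = P.b ^ 3 := by
  -- `(2b³ - 9abc + 27a²d)² = 4(b² - 3ac)³ - 27a² · discr`
  have hsq : (2 * P.b ^ 3 - 9 * P.a * P.b * P.c + 27 * P.a ^ 2 * P.d) ^ 2 = 0 := by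
    rw [discr] at hdiscr
    linear_combination 4 * (P.b ^ 2 - 3 * P.a * P.c) ^ 2 * h - 27 * P.a ^ 2 * hdiscr
  linear_combination (pow_eq_zero_iff two_ne_zero).1 hsq - 3 * P.b * h

-- `r` is the common root of `P` and its derivative; `s` then comes from `a (2r + s) = -b`.
theorem exists_eval_eq_mul_sq_of_discr_eq_zero [NeZero (2 : K)] (ha : P.a ≠ 0)
    (hΔ₀ : P.b ^ 2 - 3 * P.a * P.c ≠ 0) (hdiscr : P.discr = 0) :
    ∃ r s : K, r ≠ s ∧
      ∀ x, P.a * x ^ 3 + P.b * x ^ 2 + P.c * x + P.d = P.a * (x - r) ^ 2 * (x - s) := by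
  obtain ⟨a, b, c, d⟩ := P
  dsimp only [discr] at *
  -- `field_simp` only cancels `b ^ 2 - 3 * a * c` when it is given in its own normal form
  have hΔ₀' : b ^ 2 - a * c * 3 ≠ 0 := by contrapose! hΔ₀; linear_combination hΔ₀
  set r := (9 * a * d - b * c) / (2 * (b ^ 2 - 3 * a * c))
  set s := (4 * a * b * c - 9 * a ^ 2 * d - b ^ 3) / (a * (b ^ 2 - 3 * a * c))
  have hb : a * (2 * r + s) = -b := by
    simp only [r, s]; field_simp; ring
  have hc : a * (r ^ 2 + 2 * r * s) = c := by
    simp only [r, s]; field_simp; linear_combination 9 * a * hdiscr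
  have hd : a * (r ^ 2 * s) = -d := by
    simp only [r, s]; field_simp; linear_combination (27 * a ^ 2 * d - b ^ 3) * hdiscr
  clear_value r s
  refine ⟨r, s, fun hrs ↦ hΔ₀ ?_, fun x ↦ ?_⟩
  · rw [← hrs] at hb hc
    linear_combination (b - 3 * a * r) * hb + 3 * a * hc
  · linear_combination x ^ 2 * hb - x * hc + hd

end Cubic

theorem alternating_cubic_pos_of_nonpos {K : Type*} [Field K] [LinearOrder K]
    [IsStrictOrderedRing K] {S₀ S₁ S₂ S₃ x : K} (hS₀ : 0 ≤ S₀) (hS₁ : 0 ≤ S₁) (hS₂ : 0 ≤ S₂)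
    (hS₃ : 0 < S₃) (hx : x ≤ 0) : 0 < -S₀ * x ^ 3 + S₁ * x ^ 2 - S₂ * x + S₃ := by
  have h₀ : 0 ≤ S₀ * (-x) * x ^ 2 := mul_nonneg (mul_nonneg hS₀ (neg_nonneg.2 hx)) (sq_nonneg x)
  have h₁ : 0 ≤ S₁ * x ^ 2 := by positivity
  have h₂ : 0 ≤ S₂ * (-x) := mul_nonneg hS₂ (neg_nonneg.2 hx)
  linear_combination h₀ + h₁ + h₂ + hS₃

/-- If `D = 0`, `S₀, S₁, S₂, S₃ > 0`, and the triple root condition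
fails, then the cubic `p(x) = −S₀x³ + S₁x² − S₂x + S₃` has exactly two distinct
real roots, both positive: one double root `r` and one simple root `s`, i.e.
`p(x) = −S₀(x − r)²(x − s)` with `r ≠ s`.  Hence the network has exactly two
steady states in each invariant polyhedron. -/
theorem cubic_double_root_case
    (S₀ S₁ S₂ S₃ D : ℝ)
    (hS₀ : 0 < S₀) (hS₁ : 0 < S₁) (hS₂ : 0 < S₂) (hS₃ : 0 < S₃)
    (hD : D = 18 * S₀ * S₁ * S₂ * S₃ - 4 * S₁ ^ 3 * S₃ + S₁ ^ 2 * S₂ ^ 2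
      - 4 * S₀ * S₂ ^ 3 - 27 * S₀ ^ 2 * S₃ ^ 2)
    (hDzero : D = 0)
    (hnotriple : ¬(3 * S₀ * S₂ = S₁ ^ 2 ∧ 27 * S₀ ^ 2 * S₃ = S₁ ^ 3))
    (p : ℝ → ℝ)
    (hp : ∀ x, p x = -S₀ * x ^ 3 + S₁ * x ^ 2 - S₂ * x + S₃) :
    ∃ r s : ℝ, 0 < r ∧ 0 < s ∧ r ≠ s ∧
      (∀ x : ℝ, p x = -S₀ * (x - r) ^ 2 * (x - s)) ∧
      (∀ x : ℝ, p x = 0 ↔ (x = r ∨ x = s)) := by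
  let P : Cubic ℝ := ⟨-S₀, S₁, -S₂, S₃⟩
  have hdiscr : P.discr = 0 := by
    simp only [Cubic.discr, P]
    linear_combination hD.symm.trans hDzero
  have hΔ₀ : P.b ^ 2 - 3 * P.a * P.c ≠ 0 := fun h ↦ by
    have h3 : P.b ^ 2 = 3 * P.a * P.c := by linear_combination h
    refine hnotriple ⟨?_, ?_⟩
    · linear_combination -h3
    · linear_combination P.triple_root_condition_of_discr_eq_zero hdiscr h3
  obtain ⟨r, s, hrs, hP⟩ :=
    P.exists_eval_eq_mul_sq_of_discr_eq_zero (neg_ne_zero.2 hS₀.ne') hΔ₀ hdiscr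
  have hfactor (x : ℝ) : p x = -S₀ * (x - r) ^ 2 * (x - s) := by
    rw [hp]
    linear_combination hP x
  have hroots (x : ℝ) : p x = 0 ↔ x = r ∨ x = s := by
    simp [hfactor, hS₀.ne', sub_eq_zero]
  have hpos (x : ℝ) (hx : p x = 0) : 0 < x := by
    by_contra! h
    exact (alternating_cubic_pos_of_nonpos hS₀.le hS₁.le hS₂.le hS₃ h).ne' (hp x ▸ hx)
  exact ⟨r, s, hpos r ((hroots r).2 (.inl rfl)), hpos s ((hroots s).2 (.inr rfl)), hrs,
    hfactor, hroots⟩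
end

section
/- Fix nonnegative real rate constants κ_{ij} (1 ≤ i ≠ j ≤ 4) and T > 0. Let c₁* ∈ (0, T) and set x* = c₁*/(T − c₁*). If p(x*) = 0, then the derivative of the one-variable function g(c₁) = f₁(c₁, T − c₁) at c₁ = c₁* equals T·(T − c₁*)·p′(x*). In particular the sign of g′ at a steady state, and hence the stability of the steady state, depends only on the rate constants and not on T. -/
/-!
`f₁` is a binary cubic form and `p` its dehomogenization, so on the line `c₁ + c₂ = T` we have
`g c = (T - c) ^ 3 * p (c / (T - c))`. Differentiating, the term `-3 (T - c) ^ 2 p (x)` vanishes at a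
steady state, and the chain rule leaves `(T - c) ^ 3 * p' (x) * T / (T - c) ^ 2 = T (T - c) p' (x)`.
-/

open Topology

theorem hasDerivAt_sub_pow_mul_comp_div {p : ℝ → ℝ} {p' T c : ℝ} (n : ℕ) (hc : c ≠ T)
    (hp : HasDerivAt p p' (c / (T - c))) :
    HasDerivAt (fun y => (T - y) ^ n * p (y / (T - y)))
      (-(n * (T - c) ^ (n - 1)) * p (c / (T - c)) + (T - c) ^ n * (p' * (T / (T - c) ^ 2))) c := by
  have hu : T - c ≠ 0 := sub_ne_zero.2 hc.symm
  have hlin : HasDerivAt (fun y => T - y) (-1) c := (hasDerivAt_id' c).const_sub T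
  have hdiv : HasDerivAt (fun y => y / (T - y)) (T / (T - c) ^ 2) c :=
    ((hasDerivAt_id' c).div hlin hu).congr_deriv (by ring)
  exact ((hlin.pow n).mul (hp.comp c hdiv)).congr_deriv <| by
    simp only [Function.comp_apply, Pi.pow_apply]; ring

theorem steady_state_stability_independent_of_T_general
    (S₀ S₁ S₂ S₃ : ℝ)
    (f₁ : ℝ → ℝ → ℝ)
    (hf₁ : ∀ c₁ c₂, f₁ c₁ c₂ =
      -S₀ * c₁ ^ 3 + S₁ * c₁ ^ 2 * c₂ - S₂ * c₁ * c₂ ^ 2 + S₃ * c₂ ^ 3)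
    (p : ℝ → ℝ)
    (hp : ∀ x, p x = -S₀ * x ^ 3 + S₁ * x ^ 2 - S₂ * x + S₃)
    (T : ℝ)
    (c₁star : ℝ) (hc₁T : c₁star < T)
    (xstar : ℝ) (hx : xstar = c₁star / (T - c₁star))
    (hsteady : p xstar = 0)
    (g : ℝ → ℝ) (hg : ∀ c₁, g c₁ = f₁ c₁ (T - c₁)) :
    deriv g c₁star = T * (T - c₁star) * deriv p xstar := by
  subst hx
  have hp_diff : DifferentiableAt ℝ p (c₁star / (T - c₁star)) := by
    rw [funext hp]; fun_prop
  have hg_eq : g =ᶠ[𝓝 c₁star] fun c => (T - c) ^ 3 * p (c / (T - c)) := by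
    filter_upwards [eventually_ne_nhds hc₁T.ne] with c hc
    rw [hg, hf₁, hp]
    field_simp [sub_ne_zero.2 hc.symm]
  rw [hg_eq.deriv_eq,
    (hasDerivAt_sub_pow_mul_comp_div 3 hc₁T.ne hp_diff.hasDerivAt).deriv, hsteady]
  field_simp
  ring

/-- Fix nonnegative rate constants and `T > 0`.  Let `c₁* ∈ (0,T)`
and `x* = c₁*/(T − c₁*)`.  If `p(x*) = 0`, then the derivative of
`g(c₁) = f₁(c₁, T − c₁)` at `c₁ = c₁*` equals `T·(T − c₁*)·p′(x*)`.  In particular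
the sign of `g′` at a steady state, hence its stability, does not depend on `T`. -/
theorem steady_state_stability_independent_of_T
    (κ₁₂ κ₁₃ κ₁₄ κ₂₁ κ₂₃ κ₂₄ κ₃₁ κ₃₂ κ₃₄ κ₄₁ κ₄₂ κ₄₃ : ℝ)
    (hκ : 0 ≤ κ₁₂ ∧ 0 ≤ κ₁₃ ∧ 0 ≤ κ₁₄ ∧ 0 ≤ κ₂₁ ∧ 0 ≤ κ₂₃ ∧ 0 ≤ κ₂₄ ∧
          0 ≤ κ₃₁ ∧ 0 ≤ κ₃₂ ∧ 0 ≤ κ₃₄ ∧ 0 ≤ κ₄₁ ∧ 0 ≤ κ₄₂ ∧ 0 ≤ κ₄₃)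
    (S₀ S₁ S₂ S₃ : ℝ)
    (hS₀ : S₀ = 2 * κ₁₂ + 3 * κ₁₃ + κ₁₄)
    (hS₁ : S₁ = κ₄₁ - κ₄₂ - 2 * κ₄₃)
    (hS₂ : S₂ = -2 * κ₂₁ + κ₂₃ - κ₂₄)
    (hS₃ : S₃ = 3 * κ₃₁ + κ₃₂ + 2 * κ₃₄)
    (f₁ : ℝ → ℝ → ℝ)
    (hf₁ : ∀ c₁ c₂, f₁ c₁ c₂ =
      -S₀ * c₁ ^ 3 + S₁ * c₁ ^ 2 * c₂ - S₂ * c₁ * c₂ ^ 2 + S₃ * c₂ ^ 3)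
    (p : ℝ → ℝ)
    (hp : ∀ x, p x = -S₀ * x ^ 3 + S₁ * x ^ 2 - S₂ * x + S₃)
    (T : ℝ) (hT : 0 < T)
    (c₁star : ℝ) (hc₁ : 0 < c₁star) (hc₁T : c₁star < T)
    (xstar : ℝ) (hx : xstar = c₁star / (T - c₁star))
    (hsteady : p xstar = 0)
    (g : ℝ → ℝ) (hg : ∀ c₁, g c₁ = f₁ c₁ (T - c₁)) :
    deriv g c₁star = T * (T - c₁star) * deriv p xstar :=
  steady_state_stability_independent_of_T_general S₀ S₁ S₂ S₃ f₁ hf₁ p hp T c₁star hc₁T xstar hx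
    hsteady g hg
end

section
/- Let q(x) = −x³ + 6x² − 11x + 6. Then q′(1) < 0, q′(2) > 0, and q′(3) < 0. Hence for the Square network with rate constants (κ₁₂, κ₁₄, κ₂₁, κ₂₃, κ₃₂, κ₃₄, κ₄₁, κ₄₃) = (1/4, 1/2, 1, 13, 1, 2, 8, 1), the steady states with ratio c₁/c₂ equal to 1 and 3 are stable and the steady state with ratio 2 is unstable: the system is bistable. -/
theorem hasDerivAt_cubic (a b c d x : ℝ) :
    HasDerivAt (fun x => a * x ^ 3 + b * x ^ 2 + c * x + d)
      (3 * a * x ^ 2 + 2 * b * x + c) x := by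
  refine ((((hasDerivAt_pow 3 x).const_mul a).add ((hasDerivAt_pow 2 x).const_mul b)).add
    ((hasDerivAt_id x).const_mul c)).add_const d |>.congr_deriv ?_
  push_cast
  ring

theorem deriv_cubic (a b c d x : ℝ) :
    deriv (fun x => a * x ^ 3 + b * x ^ 2 + c * x + d) x = 3 * a * x ^ 2 + 2 * b * x + c :=
  (hasDerivAt_cubic a b c d x).deriv

/-- Let `q(x) = −x³ + 6x² − 11x + 6`.  Then `q′(1) < 0`,
`q′(2) > 0` and `q′(3) < 0`.  Hence for the Square with rate constants
`(1/4, 1/2, 1, 13, 1, 2, 8, 1)` the steady states with ratio `c₁/c₂` equal to `1`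
and `3` are stable while the one with ratio `2` is unstable: the system is
bistable. -/
theorem square_example_bistability
    (q : ℝ → ℝ) (hq : ∀ x, q x = -x ^ 3 + 6 * x ^ 2 - 11 * x + 6) :
    deriv q 1 < 0 ∧ 0 < deriv q 2 ∧ deriv q 3 < 0 := by
  have hq_cubic : q = fun x => (-1) * x ^ 3 + 6 * x ^ 2 + (-11) * x + 6 :=
    funext fun x => by rw [hq]; ring
  simp only [hq_cubic, deriv_cubic]
  norm_num
end
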